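/- Let G be a Lie group with Lie algebra g, V a finite-dimensional real vector space. Consider the right action of the group G ⋉ (V →ₗ g) (product (g,ξ)(h,η) = (gh, ξ + Ad_g ∘ η)) on (V →ₗ g) × (Λ²V* ⊗ g) given by (A, F)·(h, μ) = (Ad_{h⁻¹} ∘ (A + μ), Ad_{h⁻¹} ∘ F). Then a function l : (V →ₗ g) × (Λ²V* ⊗ g) → ℝ is invariant under this action if and only if l does not depend on its first argument and l(A, F) = l(A, Ad_{h⁻¹} ∘ F) for all h ∈ G; equivalently, l = l₀ ∘ pr₂ for an Ad-invariant function l₀ : Λ²V* ⊗ g → ℝ. -/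
import Mathlib


/-- algebraic Utiyama: a function `l : (V →ₗ 𝔤) × (Λ²V* ⊗ 𝔤) → ℝ` is
invariant under the action `(A, F)·(h, μ) = (Ad_{h⁻¹} ∘ (A + μ), Ad_{h⁻¹} ∘ F)` of
`G ⋉ (V →ₗ 𝔤)` iff `l = l₀ ∘ pr₂` for an `Ad`-invariant `l₀`.  Here `Λ²V* ⊗ 𝔤` is modelled
by alternating `𝔤`-valued bilinear maps on `V`. -/
theorem utiyama_invariance_iff {G : Type*} [Group G]
    {gl : Type*} [LieRing gl] [LieAlgebra ℝ gl]
    {V : Type*} [AddCommGroup V] [Module ℝ V] [FiniteDimensional ℝ V]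
    (Ad : G →* (gl ≃ₗ[ℝ] gl))
    (l : (V →ₗ[ℝ] gl) → (V →ₗ[ℝ] V →ₗ[ℝ] gl) → ℝ) :
    (∀ (A μ : V →ₗ[ℝ] gl) (F : V →ₗ[ℝ] V →ₗ[ℝ] gl), (∀ u v : V, F u v = -F v u) →
        ∀ h : G,
          l ((Ad h⁻¹).toLinearMap ∘ₗ (A + μ)) (F.compr₂ (Ad h⁻¹).toLinearMap) = l A F) ↔
    (∃ l₀ : (V →ₗ[ℝ] V →ₗ[ℝ] gl) → ℝ,
      (∀ F : V →ₗ[ℝ] V →ₗ[ℝ] gl, (∀ u v : V, F u v = -F v u) →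
        ∀ h : G, l₀ (F.compr₂ (Ad h).toLinearMap) = l₀ F) ∧
      (∀ (A : V →ₗ[ℝ] gl) (F : V →ₗ[ℝ] V →ₗ[ℝ] gl), (∀ u v : V, F u v = -F v u) →
        l A F = l₀ F)) := by
  constructor
  · intro hinv
    refine ⟨fun F => l 0 F, ?_, ?_⟩
    · intro F hF h
      have := hinv 0 0 F hF h⁻¹
      simpa using this
    · intro A F hF
      have := hinv A (-A) F hF 1
      simpa using this.symm
  · rintro ⟨l₀, hAd, hl⟩
    intro A μ F hF h
    have hF' : ∀ u v : V, (F.compr₂ (Ad h⁻¹).toLinearMap) u v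
        = -(F.compr₂ (Ad h⁻¹).toLinearMap) v u := by
      intro u v
      simp [LinearMap.compr₂_apply, hF u v]
    rw [hl _ _ hF', hl _ _ hF]
    have := hAd (F.compr₂ (Ad h⁻¹).toLinearMap) hF' h
    rw [← this]
    congr 1
    ext u v
    simp only [LinearMap.compr₂_apply]
    have : Ad h⁻¹ = (Ad h).symm := by
      have := map_inv Ad h
      rw [this]; rfl
    rw [this]; simp
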